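/- arXiv:2111.07747 — 2 statements merged into one kernel-verified Lean document; each statement's English description precedes it below -/
import Mathlib

section
/- For every n ≥ 1: (i) a(r·n) + r·a(n/r) = (φ(r) + r·φ⁻¹(r))·a(n) for every prime r with r ∤ f·T₁·T₂; (ii) a(l·n) = l·φ⁻¹(l)·a(n) for every prime l ∣ T₁; (iii) a(q·n) = φ(q)·a(n) for every prime q ∣ T₂; (iv) a(p·n) = 0 for every prime p ∣ f. Equivalently, E_{φ,T₁,T₂} is an eigenform for all Hecke operators, with T_r-eigenvalue φ(r) + r·φ⁻¹(r) for r ∤ fT₁T₂, U_l-eigenvalue l·φ⁻¹(l) for l ∣ T₁, U_q-eigenvalue φ(q) for q ∣ T₂, and U_p-eigenvalue 0 for p ∣ f. -/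
open scoped BigOperators

/-- The `n`-th Fourier coefficient of the weight-2 Eisenstein series `E_φ = E_{φ,φ⁻¹}`:
`b(n) = Σ_{d ∣ n} φ(n/d) · φ⁻¹(d) · d`. -/
noncomputable def eisCoeff (f : ℕ) (φ : DirichletCharacter ℂ f) (n : ℕ) : ℂ :=
  ∑ d ∈ n.divisors, φ ((n / d : ℕ) : ZMod f) * φ⁻¹ ((d : ℕ) : ZMod f) * (d : ℂ)

/-- The `n`-th Fourier coefficient of the refined Eisenstein series
`E_{φ,T₁,T₂} = ∏_{l ∣ T₁}[l]_φ⁺ ∘ ∏_{q ∣ T₂}[q]_φ⁻ E_φ`: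
`a(n) = Σ_{e ∣ T₁T₂} μ(e)·(∏_{l ∣ gcd(e,T₁)} φ(l))·(∏_{q ∣ gcd(e,T₂)} q·φ⁻¹(q))·b(n/e)`,
with `b(n/e)` interpreted as `0` when `e ∤ n`. -/
noncomputable def refCoeff (f : ℕ) (φ : DirichletCharacter ℂ f) (T₁ T₂ : ℕ) (n : ℕ) : ℂ :=
  ∑ e ∈ (T₁ * T₂).divisors,
    ((ArithmeticFunction.moebius e : ℤ) : ℂ) *
      (∏ l ∈ (Nat.gcd e T₁).primeFactors, φ ((l : ℕ) : ZMod f)) *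
      (∏ q ∈ (Nat.gcd e T₂).primeFactors, (q : ℂ) * φ⁻¹ ((q : ℕ) : ZMod f)) *
      (if e ∣ n then eisCoeff f φ (n / e) else 0)

/-!
The refined series is the combination `∑_{e ∣ T₁T₂} w(e) · E_φ(q^e)` of dilates of `E_φ`.
Since `b` is the Dirichlet convolution of the completely multiplicative functions `φ` and
`d ↦ φ⁻¹(d) d`, `E_φ` is a `T_r`-eigenform for every prime `r`, with Hecke polynomial
`(X - φ(r))(X - r φ⁻¹(r))`, and `T_r` commutes with `F ↦ F(q^e)` when `r ∤ e`. This gives (i),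
and (iv) because both roots vanish when `p ∣ f`. For a prime `s ∣ T₁T₂` the weights satisfy
`w(se) = -α w(e)`, where `α` is one of the two roots, so the series regroups as
`∑_{e ∣ T₁T₂/s} w(e) · G(q^e)` with `G = E_φ - α E_φ(q^s)` the `s`-stabilization of `E_φ`,
a `U_s`-eigenform whose eigenvalue is the other root.
-/

namespace Nat

lemma sum_divisors_filter_dvd {M : Type*} [AddCommMonoid M] {r : ℕ} (hr : r ≠ 0) (k : ℕ)
    (F : ℕ → M) :
    ∑ d ∈ k.divisors with r ∣ d, F d = if r ∣ k then ∑ e ∈ (k / r).divisors, F (r * e) else 0 := by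
  by_cases hrk : r ∣ k
  · obtain ⟨m, rfl⟩ := hrk
    have himage : {d ∈ (r * m).divisors | r ∣ d} = m.divisors.image (r * ·) := by
      ext d
      simp only [Finset.mem_filter, Nat.mem_divisors, Finset.mem_image]
      constructor
      · rintro ⟨⟨hd, hne⟩, e, rfl⟩
        exact ⟨e, ⟨(mul_dvd_mul_iff_left hr).mp hd, right_ne_zero_of_mul hne⟩, rfl⟩
      · rintro ⟨e, ⟨he, hm⟩, rfl⟩
        exact ⟨⟨mul_dvd_mul_left r he, mul_ne_zero hr hm⟩, dvd_mul_right r e⟩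
    rw [if_pos (dvd_mul_right r m), Nat.mul_div_cancel_left m (Nat.pos_of_ne_zero hr), himage,
      Finset.sum_image fun x _ y _ h => Nat.eq_of_mul_eq_mul_left (Nat.pos_of_ne_zero hr) h]
  · rw [if_neg hrk, Finset.sum_eq_zero]
    intro d hd
    rw [Finset.mem_filter] at hd
    exact absurd (hd.2.trans (dvd_of_mem_divisors hd.1)) hrk

lemma divisors_prime_mul_filter_not_dvd {r : ℕ} (hr : r.Prime) (m : ℕ) :
    {d ∈ (r * m).divisors | ¬ r ∣ d} = {d ∈ m.divisors | ¬ r ∣ d} := by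
  ext d
  simp only [Finset.mem_filter, Nat.mem_divisors, mul_ne_zero_iff, hr.ne_zero, ne_eq,
    not_false_eq_true, true_and, and_congr_left_iff]
  exact fun hrd _ => ⟨((hr.coprime_iff_not_dvd).mpr hrd).symm.dvd_of_dvd_mul_left, (·.mul_left r)⟩

lemma sum_divisors_prime_mul {M : Type*} [AddCommMonoid M] {s m : ℕ} (hs : s.Prime)
    (hsm : ¬ s ∣ m) (F : ℕ → M) :
    ∑ d ∈ (s * m).divisors, F d = ∑ e ∈ m.divisors, (F e + F (s * e)) := by
  rw [Nat.Coprime.divisors_mul ((hs.coprime_iff_not_dvd).mpr hsm), Finset.sum_map]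
  change ∑ p ∈ (s.divisors ×ˢ m.divisors).attach, F (p.1.1 * p.1.2) = _
  rw [Finset.sum_attach (s.divisors ×ˢ m.divisors) fun p => F (p.1 * p.2), Finset.sum_product,
    hs.divisors, Finset.sum_pair hs.one_lt.ne, ← Finset.sum_add_distrib]
  simp only [one_mul]

lemma prod_primeFactors_gcd_prime_mul {M : Type*} [CommMonoid M] (g : ℕ → M) {s e T : ℕ}
    (hs : s.Prime) (hse : ¬ s ∣ e) (hT : T ≠ 0) :
    ∏ p ∈ ((s * e).gcd T).primeFactors, g p
      = (if s ∣ T then g s else 1) * ∏ p ∈ (e.gcd T).primeFactors, g p := by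
  have hgcd : (s * e).gcd T = s.gcd T * e.gcd T := by
    rw [Nat.gcd_comm, Nat.Coprime.gcd_mul T ((hs.coprime_iff_not_dvd).mpr hse), Nat.gcd_comm T s,
      Nat.gcd_comm T e]
  rw [hgcd]
  split_ifs with hsT
  · have hsg : s ∉ (e.gcd T).primeFactors := fun h =>
      hse ((Nat.dvd_of_mem_primeFactors h).trans (Nat.gcd_dvd_left e T))
    rw [Nat.gcd_eq_left hsT, Nat.primeFactors_mul hs.ne_zero (Nat.gcd_ne_zero_right hT),
      hs.primeFactors, Finset.singleton_union, Finset.prod_insert hsg]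
  · rw [Nat.Coprime.gcd_eq_one ((hs.coprime_iff_not_dvd).mpr hsT), one_mul, one_mul]

end Nat

section HeckeOperators

variable {R : Type*} [CommRing R]

/-- The coefficient sequence of `F(q^e)`, if `a` is that of `F`. -/
def dilate (e : ℕ) : (ℕ → R) →ₗ[R] ℕ → R :=
  LinearMap.pi fun n => if e ∣ n then LinearMap.proj (n / e) else 0

lemma dilate_apply (e : ℕ) (a : ℕ → R) (n : ℕ) :
    dilate e a n = if e ∣ n then a (n / e) else 0 := by
  unfold dilate
  split_ifs <;> simp [*]

lemma dilate_apply_mul {s : ℕ} (hs : s ≠ 0) (a : ℕ → R) (n : ℕ) : dilate s a (s * n) = a n := by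
  simp [dilate_apply, hs]

lemma dilate_mul (e s : ℕ) (a : ℕ → R) : dilate (e * s) a = dilate e (dilate s a) := by
  ext n
  simp only [dilate_apply]
  by_cases hen : e ∣ n
  · simp only [if_pos hen, ← Nat.div_div_eq_div_mul, Nat.dvd_div_iff_mul_dvd hen]
  · rw [if_neg hen, if_neg fun h => hen (dvd_of_mul_right_dvd h)]

lemma dilate_comm (e s : ℕ) (a : ℕ → R) : dilate e (dilate s a) = dilate s (dilate e a) := by
  rw [← dilate_mul, ← dilate_mul, mul_comm]

/-- The Hecke operator `T_r` on coefficient sequences, for nebentypus constant `c = r χ(r)`;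
`heckeT r 0` is `U_r`. -/
def heckeT (r : ℕ) (c : R) : (ℕ → R) →ₗ[R] ℕ → R :=
  LinearMap.funLeft R R (r * ·) + c • dilate r

lemma heckeT_apply (r : ℕ) (c : R) (a : ℕ → R) (n : ℕ) :
    heckeT r c a n = a (r * n) + c * dilate r a n := rfl

lemma heckeT_dilate {r e : ℕ} (h : r.Coprime e) (c : R) (a : ℕ → R) :
    heckeT r c (dilate e a) = dilate e (heckeT r c a) := by
  ext n
  rw [heckeT_apply, dilate_comm r e, dilate_apply e _ n, dilate_apply e _ n,
    dilate_apply e _ (r * n)]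
  by_cases hen : e ∣ n
  · rw [if_pos (hen.mul_left r), if_pos hen, if_pos hen, heckeT_apply, Nat.mul_div_assoc r hen]
  · rw [if_neg (fun h' => hen (h.symm.dvd_of_dvd_mul_left h')), if_neg hen, if_neg hen, mul_zero,
      add_zero]

lemma heckeT_sum_dilate {r : ℕ} {c t : R} {a : ℕ → R} (ha : heckeT r c a = t • a)
    {s : Finset ℕ} (hs : ∀ e ∈ s, r.Coprime e) (w : ℕ → R) :
    heckeT r c (∑ e ∈ s, w e • dilate e a) = t • ∑ e ∈ s, w e • dilate e a := by
  simp only [map_sum, map_smul, Finset.smul_sum]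
  refine Finset.sum_congr rfl fun e he => ?_
  rw [heckeT_dilate (hs e he), ha, map_smul, smul_comm]

/-- `s`-stabilization: if `α, β` are the roots of the Hecke polynomial of `a` at `s`, then
`a - α a(q^s)` is a `U_s`-eigensequence with eigenvalue `β`. -/
lemma heckeT_zero_sub_smul_dilate {s : ℕ} (hs : s ≠ 0) {α β : R} {a : ℕ → R}
    (ha : heckeT s (α * β) a = (α + β) • a) :
    heckeT s 0 (a - α • dilate s a) = β • (a - α • dilate s a) := by
  ext n
  have han := congrFun ha n
  simp only [heckeT_apply, Pi.smul_apply, smul_eq_mul] at han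
  simp only [heckeT_apply, zero_mul, add_zero, Pi.sub_apply, Pi.smul_apply, smul_eq_mul,
    dilate_apply_mul hs]
  linear_combination han

lemma sum_smul_dilate_prime_mul {s m : ℕ} (hs : s.Prime)
    (hsm : ¬ s ∣ m) {w : ℕ → R} {α : R} (hw : ∀ e ∈ m.divisors, w (s * e) = -α * w e)
    (a : ℕ → R) :
    ∑ e ∈ (s * m).divisors, w e • dilate e a
      = ∑ e ∈ m.divisors, w e • dilate e (a - α • dilate s a) := by
  rw [Nat.sum_divisors_prime_mul hs hsm]
  refine Finset.sum_congr rfl fun e he => ?_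
  rw [hw e he, map_sub, map_smul, ← dilate_mul, mul_comm e s, smul_sub, smul_smul, neg_mul,
    neg_smul, mul_comm α, sub_eq_add_neg]

end HeckeOperators

section DivisorConvolution

variable {R : Type*} [CommRing R]

def divisorConv (χ₁ χ₂ : ℕ →* R) (n : ℕ) : R :=
  ∑ d ∈ n.divisors, χ₁ (n / d) * χ₂ d

lemma sum_divisors_filter_dvd_divisorConv (χ₁ χ₂ : ℕ →* R) {r : ℕ} (hr : r ≠ 0) (k : ℕ) :
    ∑ d ∈ k.divisors with r ∣ d, χ₁ (k / d) * χ₂ d = χ₂ r * dilate r (divisorConv χ₁ χ₂) k := by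
  rw [Nat.sum_divisors_filter_dvd hr, dilate_apply]
  split_ifs
  · rw [divisorConv, Finset.mul_sum]
    refine Finset.sum_congr rfl fun e _ => ?_
    rw [← Nat.div_div_eq_div_mul, map_mul]
    ring
  · rw [mul_zero]

lemma heckeT_divisorConv (χ₁ χ₂ : ℕ →* R) {r : ℕ} (hr : r.Prime) :
    heckeT r (χ₁ r * χ₂ r) (divisorConv χ₁ χ₂) = (χ₁ r + χ₂ r) • divisorConv χ₁ χ₂ := by
  ext m
  have hsplit (k : ℕ) : divisorConv χ₁ χ₂ k = ∑ d ∈ k.divisors with r ∣ d, χ₁ (k / d) * χ₂ d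
      + ∑ d ∈ k.divisors with ¬ r ∣ d, χ₁ (k / d) * χ₂ d :=
    (Finset.sum_filter_add_sum_filter_not _ _ _).symm
  have hcoprime : ∑ d ∈ (r * m).divisors with ¬ r ∣ d, χ₁ (r * m / d) * χ₂ d
      = χ₁ r * ∑ d ∈ m.divisors with ¬ r ∣ d, χ₁ (m / d) * χ₂ d := by
    rw [Nat.divisors_prime_mul_filter_not_dvd hr, Finset.mul_sum]
    refine Finset.sum_congr rfl fun d hd => ?_
    rw [Nat.mul_div_assoc r (Nat.dvd_of_mem_divisors (Finset.mem_filter.mp hd).1), map_mul]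
    ring
  have hrm := sum_divisors_filter_dvd_divisorConv χ₁ χ₂ hr.ne_zero (r * m)
  rw [dilate_apply_mul hr.ne_zero] at hrm
  have hm := sum_divisors_filter_dvd_divisorConv χ₁ χ₂ hr.ne_zero m
  rw [heckeT_apply, Pi.smul_apply, smul_eq_mul, hsplit, hrm, hcoprime]
  linear_combination -χ₁ r * hm - χ₁ r * hsplit m

end DivisorConvolution

section Eisenstein

variable {f : ℕ} (φ : DirichletCharacter ℂ f)

lemma eisCoeff_eq_divisorConv :
    eisCoeff f φ = divisorConv (φ.toMonoidHom.comp (Nat.castRingHom (ZMod f)).toMonoidHom)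
      (φ⁻¹.toMonoidHom.comp (Nat.castRingHom (ZMod f)).toMonoidHom
        * (Nat.castRingHom ℂ).toMonoidHom) := by
  ext n
  simp [eisCoeff, divisorConv, mul_assoc]

lemma heckeT_eisCoeff {r : ℕ} (hr : r.Prime) :
    heckeT r (φ r * (r * φ⁻¹ r)) (eisCoeff f φ) = (φ r + r * φ⁻¹ r) • eisCoeff f φ := by
  rw [eisCoeff_eq_divisorConv]
  convert heckeT_divisorConv _ _ hr using 3 <;> simp [mul_comm]

lemma heckeT_eisCoeff_of_coprime {r : ℕ} (hr : r.Prime) (hrf : r.Coprime f) :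
    heckeT r (r : ℂ) (eisCoeff f φ) = (φ r + r * φ⁻¹ r) • eisCoeff f φ := by
  have hunit : φ r * φ⁻¹ r = 1 := by
    rw [← MulChar.mul_apply, mul_inv_cancel,
      MulChar.one_apply ((ZMod.isUnit_iff_coprime r f).mpr hrf)]
  rw [← heckeT_eisCoeff φ hr, mul_left_comm, hunit, mul_one]

lemma heckeT_zero_eisCoeff_of_dvd {p : ℕ} (hp : p.Prime) (hpf : p ∣ f) :
    heckeT p 0 (eisCoeff f φ) = (0 : ℂ) • eisCoeff f φ := by
  have hpu : ¬ IsUnit (p : ZMod f) := by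
    rw [ZMod.isUnit_iff_coprime]
    exact (Nat.Prime.dvd_iff_not_coprime hp).mp hpf
  simpa [MulChar.map_nonunit φ hpu, MulChar.map_nonunit φ⁻¹ hpu] using heckeT_eisCoeff φ hp

end Eisenstein

section RefinedEisenstein

variable {f : ℕ} (φ : DirichletCharacter ℂ f) (T₁ T₂ : ℕ)

noncomputable def refWeight (e : ℕ) : ℂ :=
  ((ArithmeticFunction.moebius e : ℤ) : ℂ) * (∏ l ∈ (e.gcd T₁).primeFactors, φ l) *
    ∏ q ∈ (e.gcd T₂).primeFactors, (q : ℂ) * φ⁻¹ q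

lemma refCoeff_eq_sum :
    refCoeff f φ T₁ T₂
      = ∑ e ∈ (T₁ * T₂).divisors, refWeight φ T₁ T₂ e • dilate e (eisCoeff f φ) := by
  ext n
  simp only [refCoeff, refWeight, Finset.sum_apply, Pi.smul_apply, smul_eq_mul, dilate_apply]

lemma refWeight_prime_mul {T₁ T₂ s e : ℕ} (hs : s.Prime) (hse : ¬ s ∣ e) (hT₁ : T₁ ≠ 0)
    (hT₂ : T₂ ≠ 0) :
    refWeight φ T₁ T₂ (s * e) = -((if s ∣ T₁ then φ s else 1) *
      (if s ∣ T₂ then (s : ℂ) * φ⁻¹ s else 1)) * refWeight φ T₁ T₂ e := by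
  rw [refWeight, refWeight, ArithmeticFunction.isMultiplicative_moebius.map_mul_of_coprime
    ((hs.coprime_iff_not_dvd).mpr hse), ArithmeticFunction.moebius_apply_prime hs,
    Nat.prod_primeFactors_gcd_prime_mul _ hs hse hT₁,
    Nat.prod_primeFactors_gcd_prime_mul _ hs hse hT₂]
  push_cast
  ring

variable {φ T₁ T₂}

lemma heckeT_refCoeff_of_coprime {r : ℕ} {c t : ℂ} (hr : r.Coprime (T₁ * T₂))
    (h : heckeT r c (eisCoeff f φ) = t • eisCoeff f φ) :
    heckeT r c (refCoeff f φ T₁ T₂) = t • refCoeff f φ T₁ T₂ := by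
  rw [refCoeff_eq_sum]
  exact heckeT_sum_dilate h (fun e he => hr.coprime_dvd_right (Nat.dvd_of_mem_divisors he)) _

lemma heckeT_zero_refCoeff_of_dvd {s : ℕ} (hs : s.Prime) (hsT : s ∣ T₁ * T₂)
    (hsq : Squarefree (T₁ * T₂)) {α β : ℂ}
    (hα : (if s ∣ T₁ then φ s else 1) * (if s ∣ T₂ then (s : ℂ) * φ⁻¹ s else 1) = α)
    (h : heckeT s (α * β) (eisCoeff f φ) = (α + β) • eisCoeff f φ) :
    heckeT s 0 (refCoeff f φ T₁ T₂) = β • refCoeff f φ T₁ T₂ := by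
  obtain ⟨m, hm⟩ := hsT
  have hsm : ¬ s ∣ m := fun hsm =>
    hs.not_isUnit (hsq s (hm ▸ mul_dvd_mul_left s hsm))
  have hse : ∀ e ∈ m.divisors, ¬ s ∣ e := fun e he hse =>
    hsm (hse.trans (Nat.dvd_of_mem_divisors he))
  obtain ⟨hT₁, hT₂⟩ := mul_ne_zero_iff.mp hsq.ne_zero
  rw [refCoeff_eq_sum, hm, sum_smul_dilate_prime_mul hs hsm
    fun e he => by rw [refWeight_prime_mul φ hs (hse e he) hT₁ hT₂, hα]]
  exact heckeT_sum_dilate (heckeT_zero_sub_smul_dilate hs.ne_zero h)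
    (fun e he => (hs.coprime_iff_not_dvd).mpr (hse e he)) _

end RefinedEisenstein

theorem refCoeff_hecke_eigen_general
    (f : ℕ) (φ : DirichletCharacter ℂ f)
    (T₁ T₂ : ℕ)
    (hsf₁ : Squarefree T₁) (hsf₂ : Squarefree T₂)
    (hT₁T₂ : Nat.Coprime T₁ T₂) (hT₁f : Nat.Coprime T₁ f) (hT₂f : Nat.Coprime T₂ f)
    (n : ℕ) :
    (∀ r : ℕ, r.Prime → ¬ r ∣ f * T₁ * T₂ →
      refCoeff f φ T₁ T₂ (r * n) +
          (r : ℂ) * (if r ∣ n then refCoeff f φ T₁ T₂ (n / r) else 0) =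
        (φ ((r : ℕ) : ZMod f) + (r : ℂ) * φ⁻¹ ((r : ℕ) : ZMod f)) * refCoeff f φ T₁ T₂ n) ∧
    (∀ l : ℕ, l.Prime → l ∣ T₁ →
      refCoeff f φ T₁ T₂ (l * n) =
        (l : ℂ) * φ⁻¹ ((l : ℕ) : ZMod f) * refCoeff f φ T₁ T₂ n) ∧
    (∀ q : ℕ, q.Prime → q ∣ T₂ →
      refCoeff f φ T₁ T₂ (q * n) = φ ((q : ℕ) : ZMod f) * refCoeff f φ T₁ T₂ n) ∧
    (∀ p : ℕ, p.Prime → p ∣ f →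
      refCoeff f φ T₁ T₂ (p * n) = 0) := by
  have hsq : Squarefree (T₁ * T₂) := (Nat.squarefree_mul hT₁T₂).mpr ⟨hsf₁, hsf₂⟩
  refine ⟨fun r hr hrT => ?_, fun l hl hlT₁ => ?_, fun q hq hqT₂ => ?_, fun p hp hpf => ?_⟩
  · rw [mul_assoc, ← hr.coprime_iff_not_dvd, Nat.coprime_mul_iff_right] at hrT
    have h := heckeT_refCoeff_of_coprime hrT.2 (heckeT_eisCoeff_of_coprime φ hr hrT.1)
    simpa [heckeT_apply, dilate_apply] using congrFun h n
  · have hlT₂ : ¬ l ∣ T₂ := hl.coprime_iff_not_dvd.mp (hT₁T₂.coprime_dvd_left hlT₁)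
    have h := heckeT_zero_refCoeff_of_dvd hl (hlT₁.mul_right T₂) hsq (by simp [hlT₁, hlT₂])
      (heckeT_eisCoeff φ hl)
    simpa [heckeT_apply] using congrFun h n
  · have hqT₁ : ¬ q ∣ T₁ := hq.coprime_iff_not_dvd.mp (hT₁T₂.symm.coprime_dvd_left hqT₂)
    have h := heckeT_zero_refCoeff_of_dvd hq (hqT₂.mul_left T₁) hsq (φ := φ) (α := q * φ⁻¹ q)
      (by simp [hqT₁, hqT₂])
      (by rw [mul_comm, add_comm]; exact heckeT_eisCoeff φ hq)
    simpa [heckeT_apply] using congrFun h n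
  · have hpT : p.Coprime (T₁ * T₂) := ((hT₁f.mul_left hT₂f).coprime_dvd_right hpf).symm
    have h := heckeT_refCoeff_of_coprime hpT (heckeT_zero_eisCoeff_of_dvd φ hp hpf)
    simpa [heckeT_apply] using congrFun h n

/-- `E_{φ,T₁,T₂}` is an eigenform for all Hecke operators: `T_r`-eigenvalue
`φ(r) + r·φ⁻¹(r)` for primes `r ∤ fT₁T₂`, `U_l`-eigenvalue `l·φ⁻¹(l)` for primes `l ∣ T₁`,
`U_q`-eigenvalue `φ(q)` for primes `q ∣ T₂`, and `U_p`-eigenvalue `0` for primes `p ∣ f`. -/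
theorem refCoeff_hecke_eigen
    (f : ℕ) (hf : 1 < f) (φ : DirichletCharacter ℂ f)
    (hφ : φ ≠ 1) (hφprim : φ.IsPrimitive)
    (T₁ T₂ : ℕ) (hT₁ : 0 < T₁) (hT₂ : 0 < T₂)
    (hsf₁ : Squarefree T₁) (hsf₂ : Squarefree T₂)
    (hT₁T₂ : Nat.Coprime T₁ T₂) (hT₁f : Nat.Coprime T₁ f) (hT₂f : Nat.Coprime T₂ f)
    (n : ℕ) (hn : 1 ≤ n) :
    (∀ r : ℕ, r.Prime → ¬ r ∣ f * T₁ * T₂ →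
      refCoeff f φ T₁ T₂ (r * n) +
          (r : ℂ) * (if r ∣ n then refCoeff f φ T₁ T₂ (n / r) else 0) =
        (φ ((r : ℕ) : ZMod f) + (r : ℂ) * φ⁻¹ ((r : ℕ) : ZMod f)) * refCoeff f φ T₁ T₂ n) ∧
    (∀ l : ℕ, l.Prime → l ∣ T₁ →
      refCoeff f φ T₁ T₂ (l * n) =
        (l : ℂ) * φ⁻¹ ((l : ℕ) : ZMod f) * refCoeff f φ T₁ T₂ n) ∧
    (∀ q : ℕ, q.Prime → q ∣ T₂ →
      refCoeff f φ T₁ T₂ (q * n) = φ ((q : ℕ) : ZMod f) * refCoeff f φ T₁ T₂ n) ∧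
    (∀ p : ℕ, p.Prime → p ∣ f →
      refCoeff f φ T₁ T₂ (p * n) = 0) :=
  refCoeff_hecke_eigen_general f φ T₁ T₂ hsf₁ hsf₂ hT₁T₂ hT₁f hT₂f n
end

section
/- Let N ≥ 2 and let γ ∈ SL₂(ℤ) have both off-diagonal entries divisible by N, i.e. γ ∈ Γ₀′(N). Then γ^{φ(N²)/2} ∈ Γ′(N); that is, the off-diagonal entries of γ^{φ(N²)/2} are divisible by N and each of its diagonal entries is congruent to 1 or −1 modulo N². -/
/-!
Matrices whose off-diagonal entries are divisible by `n` form a monoid, and on it each diagonal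
entry is multiplicative modulo `n²`; hence `(γ ^ e) i i ≡ γ i i ^ e [ZMOD N²]`.
As `det γ = 1`, the diagonal entries are units modulo `N`, and every such unit `t` satisfies
`t ^ (φ(N²)/2) ≡ ±1 [ZMOD N²]`. For `N = p ^ k` with `p` odd this is because `±1` are the only
square roots of `1` modulo `p ^ (2k)`; for `N = 2 ^ k` with `k ≥ 2`, and for `N` with two coprime
factors `a, b ≥ 2`, the Carmichael function `λ(N²)` already divides `φ(N²)/2` (in the latter case
`λ(a²b²) = lcm(λ(a²), λ(b²))` and both `φ(a²)` and `φ(b²)` are even); `N = 2` is checked by hand.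
-/

open Nat ArithmeticFunction

namespace Matrix

variable {m R : Type*} [Fintype m] [DecidableEq m]

def offDiagDvd [CommSemiring R] (n : R) : Submonoid (Matrix m m R) where
  carrier := {A | ∀ i j, i ≠ j → n ∣ A i j}
  one_mem' i j hij := by simp [one_apply_ne hij]
  mul_mem' {A B} hA hB i j hij := by
    rw [mul_apply]
    refine Finset.dvd_sum fun k _ => ?_
    by_cases hki : k = i
    · exact hki ▸ (hB k j (hki ▸ hij)).mul_left _
    · exact (hA i k (Ne.symm hki)).mul_right _

variable [CommRing R] {n : R} {A B : Matrix m m R}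

theorem sq_dvd_mul_apply_self_sub (hA : A ∈ offDiagDvd n) (hB : B ∈ offDiagDvd n) (i : m) :
    n ^ 2 ∣ (A * B) i i - A i i * B i i := by
  rw [mul_apply, ← Finset.add_sum_erase _ _ (Finset.mem_univ i), add_sub_cancel_left]
  refine Finset.dvd_sum fun k hk => ?_
  have hki := Finset.ne_of_mem_erase hk
  exact sq n ▸ mul_dvd_mul (hA i k hki.symm) (hB k i hki)

theorem sq_dvd_pow_apply_self_sub_pow (hA : A ∈ offDiagDvd n) (k : ℕ) (i : m) :
    n ^ 2 ∣ (A ^ k) i i - A i i ^ k := by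
  induction k with
  | zero => simp
  | succ k ih =>
    have h := sq_dvd_mul_apply_self_sub (Submonoid.pow_mem _ hA k) hA i
    convert h.add (ih.mul_right (A i i)) using 1
    rw [pow_succ, pow_succ]
    ring

theorem isCoprime_apply_self_of_det_eq_one {A : Matrix (Fin 2) (Fin 2) R} (hA : A.det = 1)
    (h : n ∣ A 0 1) : ∀ i, IsCoprime (A i i) n := by
  obtain ⟨c, hc⟩ := h
  rw [det_fin_two, hc] at hA
  exact Fin.forall_fin_two.mpr
    ⟨⟨A 1 1, -(c * A 1 0), by linear_combination hA⟩,
      ⟨A 0 0, -(c * A 1 0), by linear_combination hA⟩⟩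

end Matrix

namespace ArithmeticFunction

theorem carmichael_mul_dvd_totient_div_two {a b : ℕ} (ha : 2 < a) (hb : 2 < b)
    (hab : a.Coprime b) :
    carmichael (a * b) ∣ φ (a * b) / 2 := by
  obtain ⟨a', ha'⟩ := (totient_even ha).two_dvd
  obtain ⟨b', hb'⟩ := (totient_even hb).two_dvd
  rw [carmichael_mul hab, totient_mul hab, ha', hb',
    show 2 * a' * (2 * b') = 2 * (2 * a' * b') by ring, Nat.mul_div_cancel_left _ two_pos]
  refine Nat.lcm_dvd ?_ ?_
  · exact (ha' ▸ carmichael_dvd_totient a).mul_right b'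
  · exact (hb' ▸ carmichael_dvd_totient b).trans ⟨a', by ring⟩

end ArithmeticFunction

namespace Int

theorem pow_modEq_one_of_carmichael_dvd {n e : ℕ} {t : ℤ} (ht : IsCoprime t n)
    (he : carmichael n ∣ e) : t ^ e ≡ 1 [ZMOD n] := by
  obtain ⟨x, y, hxy⟩ := ht
  have hu : IsUnit (t : ZMod n) := IsUnit.of_mul_eq_one (x : ZMod n) <| by
    simpa [mul_comm] using congrArg (Int.cast : ℤ → ZMod n) hxy
  obtain ⟨e', rfl⟩ := he
  rw [← ZMod.intCast_eq_intCast_iff, cast_pow, ← hu.unit_spec, ← Units.val_pow_eq_pow_val,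
    pow_mul, pow_carmichael, one_pow, Units.val_one, cast_one]

theorem modEq_one_or_neg_one_of_sq_modEq_one {p : ℕ} (hp : p.Prime) (hp2 : p ≠ 2) (m : ℕ)
    {x : ℤ} (h : x ^ 2 ≡ 1 [ZMOD p ^ m]) : x ≡ 1 [ZMOD p ^ m] ∨ x ≡ -1 [ZMOD p ^ m] := by
  have hpz : Prime (p : ℤ) := Nat.prime_iff_prime_int.mp hp
  have hdvd : (p : ℤ) ^ m ∣ (x - 1) * (x + 1) := by
    rw [show (x - 1) * (x + 1) = -(1 - x ^ 2) by ring, dvd_neg]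
    exact Int.modEq_iff_dvd.mp h
  -- `p` cannot divide both `x - 1` and `x + 1`, since it would then divide `2`.
  by_cases hp1 : (p : ℤ) ∣ x + 1
  · have hnd : ¬ (p : ℤ) ∣ x - 1 := fun hm => hp2 <|
      (Nat.prime_dvd_prime_iff_eq hp Nat.prime_two).mp <| Int.natCast_dvd_natCast.mp <| by
        simpa using dvd_sub hp1 hm
    have hplus := (hpz.coprime_iff_not_dvd.mpr hnd).pow_left.dvd_of_dvd_mul_left hdvd
    exact .inr (Int.modEq_iff_dvd.mpr (by rwa [sub_neg_eq_add])).symm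
  · exact .inl (Int.modEq_iff_dvd.mpr
      ((hpz.coprime_iff_not_dvd.mpr hp1).pow_left.dvd_of_dvd_mul_right hdvd)).symm

theorem pow_totient_div_two_modEq_one_or_neg_one_of_prime_pow {p : ℕ} (hp : p.Prime)
    (hp2 : p ≠ 2) (m : ℕ) {t : ℤ} (ht : IsCoprime t p) :
    t ^ (φ (p ^ m) / 2) ≡ 1 [ZMOD p ^ m] ∨ t ^ (φ (p ^ m) / 2) ≡ -1 [ZMOD p ^ m] := by
  rcases eq_or_ne m 0 with rfl | hm
  · simp [Int.modEq_one]
  apply modEq_one_or_neg_one_of_sq_modEq_one hp hp2 m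
  have hpm : 2 < p ^ m := (hp.two_le.lt_of_ne' hp2).trans_le (Nat.le_self_pow hm p)
  rw [← pow_mul, Nat.div_mul_cancel (totient_even hpm).two_dvd]
  exact_mod_cast pow_modEq_one_of_carmichael_dvd (n := p ^ m) (by push_cast; exact ht.pow_right)
    (carmichael_dvd_totient _)

theorem pow_totient_sq_div_two_modEq_one_or_neg_one (N : ℕ) {t : ℤ} (ht : IsCoprime t N) :
    t ^ (φ (N ^ 2) / 2) ≡ 1 [ZMOD N ^ 2] ∨ t ^ (φ (N ^ 2) / 2) ≡ -1 [ZMOD N ^ 2] := by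
  induction N using Nat.recOnPosPrimePosCoprime with
  | zero => simp
  | one => simp [Int.modEq_one]
  | prime_pow p k hp hk =>
    have htp : IsCoprime t p :=
      ht.of_isCoprime_of_dvd_right (by push_cast; exact dvd_pow_self _ hk.ne')
    push_cast
    rw [← pow_mul, ← pow_mul]
    rcases eq_or_ne p 2 with rfl | hp2
    · rcases (show k = 1 ∨ 2 ≤ k by omega) with rfl | hk
      · have hodd : Odd t := Int.not_even_iff_odd.mp fun h2 =>
          Int.prime_two.coprime_iff_not_dvd.mp htp.symm h2.two_dvd
        rw [show φ (2 ^ (1 * 2)) / 2 = 1 by decide, pow_one]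
        simp only [Int.ModEq]
        rcases hodd with ⟨c, rfl⟩
        omega
      · left
        have htot := two_mul_carmichael_two_pow_of_three_le_eq_totient (n := k * 2) (by omega)
        exact_mod_cast pow_modEq_one_of_carmichael_dvd (n := 2 ^ (k * 2))
          (by push_cast; exact htp.pow_right) ⟨1, by omega⟩
    · exact pow_totient_div_two_modEq_one_or_neg_one_of_prime_pow hp hp2 _ htp
  | coprime a b ha hb hab _ _ =>
    left
    have hcarm := carmichael_mul_dvd_totient_div_two (a := a ^ 2) (b := b ^ 2) (by nlinarith)
      (by nlinarith) (hab.pow 2 2)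
    rw [← mul_pow] at hcarm
    exact_mod_cast pow_modEq_one_of_carmichael_dvd (by push_cast; exact ht.pow_right) hcarm

end Int

theorem pow_totient_mem_Gamma'_general
    (N : ℕ) (γ : Matrix.SpecialLinearGroup (Fin 2) ℤ)
    (h01 : (N : ℤ) ∣ γ 0 1) (h10 : (N : ℤ) ∣ γ 1 0) :
    (N : ℤ) ∣ (γ ^ (Nat.totient (N ^ 2) / 2)) 0 1 ∧
    (N : ℤ) ∣ (γ ^ (Nat.totient (N ^ 2) / 2)) 1 0 ∧
    ((γ ^ (Nat.totient (N ^ 2) / 2)) 0 0 ≡ 1 [ZMOD ((N : ℤ) ^ 2)] ∨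
      (γ ^ (Nat.totient (N ^ 2) / 2)) 0 0 ≡ -1 [ZMOD ((N : ℤ) ^ 2)]) ∧
    ((γ ^ (Nat.totient (N ^ 2) / 2)) 1 1 ≡ 1 [ZMOD ((N : ℤ) ^ 2)] ∨
      (γ ^ (Nat.totient (N ^ 2) / 2)) 1 1 ≡ -1 [ZMOD ((N : ℤ) ^ 2)]) := by
  set e := φ (N ^ 2) / 2
  have hγ : (γ : Matrix (Fin 2) (Fin 2) ℤ) ∈ Matrix.offDiagDvd (N : ℤ) := by
    intro i j hij
    fin_cases i <;> fin_cases j <;> simp_all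
  have hγe := Submonoid.pow_mem _ hγ e
  rw [← Matrix.SpecialLinearGroup.coe_pow] at hγe
  have hdiag (i : Fin 2) :
      (γ ^ e) i i ≡ 1 [ZMOD N ^ 2] ∨ (γ ^ e) i i ≡ -1 [ZMOD N ^ 2] := by
    have hcong : (γ ^ e) i i ≡ γ i i ^ e [ZMOD N ^ 2] := by
      refine (Int.modEq_iff_dvd.mpr ?_).symm
      simpa using Matrix.sq_dvd_pow_apply_self_sub_pow hγ e i
    have hcop := Matrix.isCoprime_apply_self_of_det_eq_one γ.det_coe h01 i
    exact (Int.pow_totient_sq_div_two_modEq_one_or_neg_one N hcop).imp hcong.trans hcong.trans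
  exact ⟨hγe 0 1 (by decide), hγe 1 0 (by decide), hdiag 0, hdiag 1⟩

/-- Let `N ≥ 2` and let `γ ∈ SL₂(ℤ)` have both off-diagonal entries divisible by `N`
(`γ ∈ Γ₀′(N)`). Then `γ^{φ(N²)/2} ∈ Γ′(N)`: its off-diagonal entries are divisible by `N`
and each diagonal entry is congruent to `1` or `−1` modulo `N²`. -/
theorem pow_totient_mem_Gamma'
    (N : ℕ) (hN : 2 ≤ N) (γ : Matrix.SpecialLinearGroup (Fin 2) ℤ)
    (h01 : (N : ℤ) ∣ γ 0 1) (h10 : (N : ℤ) ∣ γ 1 0) :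
    (N : ℤ) ∣ (γ ^ (Nat.totient (N ^ 2) / 2)) 0 1 ∧
    (N : ℤ) ∣ (γ ^ (Nat.totient (N ^ 2) / 2)) 1 0 ∧
    ((γ ^ (Nat.totient (N ^ 2) / 2)) 0 0 ≡ 1 [ZMOD ((N : ℤ) ^ 2)] ∨
      (γ ^ (Nat.totient (N ^ 2) / 2)) 0 0 ≡ -1 [ZMOD ((N : ℤ) ^ 2)]) ∧
    ((γ ^ (Nat.totient (N ^ 2) / 2)) 1 1 ≡ 1 [ZMOD ((N : ℤ) ^ 2)] ∨
      (γ ^ (Nat.totient (N ^ 2) / 2)) 1 1 ≡ -1 [ZMOD ((N : ℤ) ^ 2)]) :=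
  pow_totient_mem_Gamma'_general N γ h01 h10
end
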